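/- Let Φ : ℙ_n → ℙ_n be a map on positive definite n×n matrices that is order preserving (C₁ ≤ C₂ implies Φ(C₁) ≤ Φ(C₂)), positively homogeneous (Φ(αC) = αΦ(C) for α > 0), unital (Φ(I) = I), and trace-subpreserving (Tr Φ(C) ≤ Tr C for all C). Then for every positive definite C, the eigenvalue vector of Φ(C) is weakly majorized by that of C. -/

import Mathlib

open Matrix ComplexOrder

namespace Heron

variable {n : ℕ}

def WeakMaj {n : ℕ} (x y : Fin n → ℝ) : Prop :=
  ∀ s : Finset (Fin n), ∃ t : Finset (Fin n),
    t.card = s.card ∧ ∑ i ∈ s, x i ≤ ∑ i ∈ t, y i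

def Maj {n : ℕ} (x y : Fin n → ℝ) : Prop :=
  WeakMaj x y ∧ ∑ i, x i = ∑ i, y i

lemma sandwich_posSemidef {S T : Matrix (Fin n) (Fin n) ℂ} (hS : S.IsHermitian)
    (hT : T.PosSemidef) : (S * T * S).PosSemidef := by
  have h := hT.mul_mul_conjTranspose_same S
  rwa [hS.eq] at h

/-- The square root of a positive semidefinite matrix, as defined in the older Mathlib
(`Matrix.PosSemidef.sqrt`, since removed). -/
noncomputable def _root_.Matrix.PosSemidef.sqrt {m 𝕜 : Type*} [Fintype m] [RCLike 𝕜]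
    [DecidableEq m] {A : Matrix m m 𝕜} (hA : A.PosSemidef) : Matrix m m 𝕜 :=
  hA.1.eigenvectorUnitary.1 * diagonal ((↑) ∘ (√·) ∘ hA.1.eigenvalues) *
  (star hA.1.eigenvectorUnitary : Matrix m m 𝕜)

lemma _root_.Matrix.PosSemidef.posSemidef_sqrt {m 𝕜 : Type*} [Fintype m] [RCLike 𝕜]
    [DecidableEq m] {A : Matrix m m 𝕜} (hA : A.PosSemidef) : hA.sqrt.PosSemidef := by
  unfold Matrix.PosSemidef.sqrt
  have h := Matrix.PosSemidef.mul_mul_conjTranspose_same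
    (Matrix.posSemidef_diagonal_iff.mpr fun i => by
      simpa using Real.sqrt_nonneg (hA.1.eigenvalues i) :
      (diagonal ((↑) ∘ (√·) ∘ hA.1.eigenvalues : m → 𝕜)).PosSemidef)
    (hA.1.eigenvectorUnitary : Matrix m m 𝕜)
  simpa [Matrix.star_eq_conjTranspose] using h

noncomputable def geomMean {A B : Matrix (Fin n) (Fin n) ℂ}
    (hA : A.PosDef) (hB : B.PosDef) : Matrix (Fin n) (Fin n) ℂ :=
  hA.posSemidef.sqrt *
    (sandwich_posSemidef hA.posSemidef.posSemidef_sqrt.isHermitian.inv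
        hB.posSemidef).sqrt *
    hA.posSemidef.sqrt

lemma geomMean_posSemidef {A B : Matrix (Fin n) (Fin n) ℂ}
    (hA : A.PosDef) (hB : B.PosDef) : (geomMean hA hB).PosSemidef :=
  sandwich_posSemidef hA.posSemidef.posSemidef_sqrt.isHermitian
    (Matrix.PosSemidef.posSemidef_sqrt _)

noncomputable def specMean {A B : Matrix (Fin n) (Fin n) ℂ}
    (hA : A.PosDef) (hB : B.PosDef) : Matrix (Fin n) (Fin n) ℂ :=
  (geomMean_posSemidef hA.inv hB).sqrt * A * (geomMean_posSemidef hA.inv hB).sqrt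

def HasPosSpectrum (M : Matrix (Fin n) (Fin n) ℂ) : Prop :=
  ∀ z ∈ spectrum ℂ M, 0 < z.re ∧ z.im = 0

def IsPrincipalSqrt (M S : Matrix (Fin n) (Fin n) ℂ) : Prop :=
  S * S = M ∧ HasPosSpectrum S

noncomputable def absMat (Y : Matrix (Fin n) (Fin n) ℂ) : Matrix (Fin n) (Fin n) ℂ :=
  (Matrix.posSemidef_conjTranspose_mul_self Y).sqrt

noncomputable def posPart (H : Matrix (Fin n) (Fin n) ℂ) : Matrix (Fin n) (Fin n) ℂ :=
  ((1 : ℂ) / 2) • (absMat H + H)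

end Heron

/-! Let `μ` be the `k`-th largest eigenvalue of `C` and `D = max(C, μ • 1)` (functional calculus).
Then `C ≤ D` and `μ ≤ D`, so `Φ C ≤ Φ D` and `μ = Φ μ ≤ Φ D`. In an eigenbasis of `Φ C` the
diagonal of `Φ D` dominates the eigenvalues of `Φ C` and is at least `μ`, hence for `|s| = k`
`∑_{i ∈ s} λᵢ(Φ C) + (n - k) μ ≤ Tr Φ D ≤ Tr D = (sum of the k largest eigenvalues of C) + (n - k) μ`.
-/

open Unitary

namespace Matrix

variable {m 𝕜 : Type*} [Fintype m] [DecidableEq m] [RCLike 𝕜]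

lemma trace_conjStarAlgAut (U : unitary (Matrix m m 𝕜)) (X : Matrix m m 𝕜) :
    (conjStarAlgAut 𝕜 _ U X).trace = X.trace := by
  rw [conjStarAlgAut_apply, trace_mul_cycle, Unitary.coe_star_mul_self, one_mul]

lemma PosSemidef.conjStarAlgAut {X : Matrix m m 𝕜} (hX : X.PosSemidef)
    (U : unitary (Matrix m m 𝕜)) : (conjStarAlgAut 𝕜 _ U X).PosSemidef := by
  simpa [star_eq_conjTranspose] using hX.mul_mul_conjTranspose_same (U : Matrix m m 𝕜)

namespace IsHermitian

variable {A : Matrix m m 𝕜} (hA : A.IsHermitian)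
include hA

lemma cfc_id : hA.cfc id = A := hA.spectral_theorem.symm

lemma cfc_const (c : ℝ) : hA.cfc (fun _ ↦ c) = (c : 𝕜) • 1 := by
  change conjStarAlgAut 𝕜 _ _ (diagonal fun _ ↦ (c : 𝕜)) = _
  rw [← smul_one_eq_diagonal, map_smul, map_one]

lemma cfc_sub (f g : ℝ → ℝ) : hA.cfc (f - g) = hA.cfc f - hA.cfc g := by
  simp only [IsHermitian.cfc, ← map_sub, diagonal_sub]
  congr 2
  ext i
  simp

lemma trace_cfc (f : ℝ → ℝ) : (hA.cfc f).trace = ∑ i, (f (hA.eigenvalues i) : 𝕜) := by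
  rw [IsHermitian.cfc, trace_conjStarAlgAut, trace_diagonal]
  rfl

lemma posSemidef_cfc_sub_cfc {f g : ℝ → ℝ}
    (hfg : ∀ i, g (hA.eigenvalues i) ≤ f (hA.eigenvalues i)) :
    (hA.cfc f - hA.cfc g).PosSemidef := by
  rw [← hA.cfc_sub]
  refine PosSemidef.conjStarAlgAut (posSemidef_diagonal_iff.mpr fun i ↦ ?_) _
  simpa using sub_nonneg.mpr (hfg i)

lemma sum_eigenvalues_add_card_compl_mul_le_re_trace {B : Matrix m m 𝕜} {c : ℝ}
    (hBA : (B - A).PosSemidef) (hBc : (B - (c : 𝕜) • 1).PosSemidef) (s : Finset m) :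
    ∑ i ∈ s, hA.eigenvalues i + sᶜ.card * c ≤ RCLike.re B.trace := by
  set U := star hA.eigenvectorUnitary
  set W := conjStarAlgAut 𝕜 _ U B
  have hW_eig : ∀ i, hA.eigenvalues i ≤ RCLike.re (W i i) := fun i ↦ by
    have h := (hBA.conjStarAlgAut U).diag_nonneg (i := i)
    rw [map_sub, hA.conjStarAlgAut_star_eigenvectorUnitary] at h
    simpa [W, U] using (RCLike.nonneg_iff.mp h).1
  have hW_c : ∀ i, c ≤ RCLike.re (W i i) := fun i ↦ by
    have h := (hBc.conjStarAlgAut U).diag_nonneg (i := i)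
    rw [map_sub, map_smul, map_one] at h
    simpa [W, U, RCLike.smul_re] using (RCLike.nonneg_iff.mp h).1
  calc ∑ i ∈ s, hA.eigenvalues i + sᶜ.card * c
      ≤ ∑ i ∈ s, RCLike.re (W i i) + ∑ i ∈ sᶜ, RCLike.re (W i i) := by
        rw [← nsmul_eq_mul]
        exact add_le_add (Finset.sum_le_sum fun i _ ↦ hW_eig i)
          (Finset.card_nsmul_le_sum _ _ _ fun i _ ↦ hW_c i)
    _ = RCLike.re B.trace := by
        rw [Finset.sum_add_sum_compl, ← trace_conjStarAlgAut U B, trace, map_sum]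
        rfl

end IsHermitian
end Matrix

namespace Finset

variable {ι β : Type*} [Fintype ι] [AddCommMonoid β] [LinearOrder β]

lemma exists_card_eq_forall_notMem_le_min [IsOrderedCancelAddMonoid β] (f : ι → β) {k : ℕ}
    (hk₀ : 0 < k) (hk : k ≤ Fintype.card ι) :
    ∃ t : Finset ι, t.card = k ∧ ∃ i₀ ∈ t, (∀ i ∈ t, f i₀ ≤ f i) ∧ ∀ j ∉ t, f j ≤ f i₀ := by
  classical
  obtain ⟨t, ht, hmax⟩ := (univ.powersetCard k).exists_max_image (fun u ↦ ∑ i ∈ u, f i)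
    (powersetCard_nonempty.mpr (by simpa using hk))
  rw [mem_powersetCard_univ] at ht
  obtain ⟨i₀, hi₀, hmin⟩ := t.exists_min_image f (card_pos.mp (ht ▸ hk₀))
  refine ⟨t, ht, i₀, hi₀, hmin, fun j hj ↦ not_lt.mp fun hlt ↦ ?_⟩
  have hj' : j ∉ t.erase i₀ := fun h ↦ hj (mem_of_mem_erase h)
  have hswap := hmax (insert j (t.erase i₀)) <| by
    rw [mem_powersetCard_univ, card_insert_of_notMem hj', card_erase_of_mem hi₀]
    omega
  rw [sum_insert hj', ← add_sum_erase t f hi₀] at hswap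
  exact (add_lt_add_left hlt _).not_ge hswap

lemma sum_max_eq_sum_add_card_compl_nsmul [DecidableEq ι] (f : ι → β) (t : Finset ι) {μ : β}
    (hin : ∀ i ∈ t, μ ≤ f i) (hout : ∀ j ∉ t, f j ≤ μ) :
    ∑ i, max (f i) μ = ∑ i ∈ t, f i + tᶜ.card • μ := by
  rw [← sum_add_sum_compl t, sum_congr rfl fun i hi ↦ max_eq_left (hin i hi),
    sum_congr rfl fun j hj ↦ max_eq_right (hout j (mem_compl.mp hj)), sum_const]

end Finset

namespace Heron

theorem nonlinear_kyfan_contraction_general {n : ℕ}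
    (Φ : Matrix (Fin n) (Fin n) ℂ → Matrix (Fin n) (Fin n) ℂ)
    (hmono : ∀ C₁ C₂ : Matrix (Fin n) (Fin n) ℂ, C₁.PosDef → C₂.PosDef →
      (C₂ - C₁).PosSemidef → (Φ C₂ - Φ C₁).PosSemidef)
    (hhom : ∀ α : ℝ, 0 < α → ∀ C : Matrix (Fin n) (Fin n) ℂ, C.PosDef →
      Φ ((α : ℂ) • C) = (α : ℂ) • Φ C)
    (hunit : Φ 1 = 1)
    (htr : ∀ C : Matrix (Fin n) (Fin n) ℂ, C.PosDef →
      (Φ C).trace.re ≤ C.trace.re)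
    (C : Matrix (Fin n) (Fin n) ℂ) (hC : C.PosDef)
    (hΦC : (Φ C).IsHermitian) :
    WeakMaj hΦC.eigenvalues hC.isHermitian.eigenvalues := by
  intro s
  rcases s.eq_empty_or_nonempty with rfl | hs
  · exact ⟨∅, by simp⟩
  set lam := hC.isHermitian.eigenvalues
  obtain ⟨t, htcard, i₀, -, hin, hout⟩ :=
    Finset.exists_card_eq_forall_notMem_le_min lam hs.card_pos s.card_le_univ
  set μ := lam i₀
  have hμ : 0 < μ := hC.eigenvalues_pos i₀
  set D := hC.isHermitian.cfc (max · μ)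
  have hDC : (D - C).PosSemidef := by
    simpa [hC.isHermitian.cfc_id] using
      hC.isHermitian.posSemidef_cfc_sub_cfc (g := id) fun i ↦ le_max_left (lam i) μ
  have hDμ : (D - (μ : ℂ) • 1).PosSemidef := by
    simpa [hC.isHermitian.cfc_const] using
      hC.isHermitian.posSemidef_cfc_sub_cfc (g := fun _ ↦ μ) fun i ↦ le_max_right (lam i) μ
  have hD : D.PosDef := by simpa using hC.add_posSemidef hDC
  have hμ1 : ((μ : ℂ) • 1 : Matrix (Fin n) (Fin n) ℂ).PosDef :=
    PosDef.one.smul (by exact_mod_cast hμ)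
  have hΦDμ : (Φ D - (μ : ℂ) • 1).PosSemidef := by
    have h := hmono _ D hμ1 hD hDμ
    rwa [hhom μ hμ 1 PosDef.one, hunit] at h
  have hkey : ∑ i ∈ s, hΦC.eigenvalues i + sᶜ.card * μ ≤ (Φ D).trace.re :=
    hΦC.sum_eigenvalues_add_card_compl_mul_le_re_trace (hmono C D hC hD hDC) hΦDμ s
  have htrD : D.trace.re = ∑ i ∈ t, lam i + tᶜ.card * μ := by
    rw [hC.isHermitian.trace_cfc, Complex.re_sum]
    simpa using Finset.sum_max_eq_sum_add_card_compl_nsmul lam t hin hout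
  have hcard : sᶜ.card = tᶜ.card := by simp [Finset.card_compl, htcard]
  refine ⟨t, htcard, ?_⟩
  rw [hcard] at hkey
  linarith [htr D hD]

/-- the nonlinear Ky Fan contraction principle: an order
preserving, positively homogeneous, unital, trace-subpreserving map on
positive definite matrices weakly majorizes downwards. -/
theorem nonlinear_kyfan_contraction {n : ℕ}
    (Φ : Matrix (Fin n) (Fin n) ℂ → Matrix (Fin n) (Fin n) ℂ)
    (hmap : ∀ C : Matrix (Fin n) (Fin n) ℂ, C.PosDef → (Φ C).PosDef)
    (hmono : ∀ C₁ C₂ : Matrix (Fin n) (Fin n) ℂ, C₁.PosDef → C₂.PosDef →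
      (C₂ - C₁).PosSemidef → (Φ C₂ - Φ C₁).PosSemidef)
    (hhom : ∀ α : ℝ, 0 < α → ∀ C : Matrix (Fin n) (Fin n) ℂ, C.PosDef →
      Φ ((α : ℂ) • C) = (α : ℂ) • Φ C)
    (hunit : Φ 1 = 1)
    (htr : ∀ C : Matrix (Fin n) (Fin n) ℂ, C.PosDef →
      (Φ C).trace.re ≤ C.trace.re)
    (C : Matrix (Fin n) (Fin n) ℂ) (hC : C.PosDef)
    (hΦC : (Φ C).IsHermitian) :
    WeakMaj hΦC.eigenvalues hC.isHermitian.eigenvalues :=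
  nonlinear_kyfan_contraction_general Φ hmono hhom hunit htr C hC hΦC

end Heron
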